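/- Let B_0, …, B_{n−1} be graphs of maximum degree at most 1, G their co-normal product, and g : G → G an injective homomorphism with componentwise factors g_i : S_i → S_{σ(i)}. If q and x_0 are vertices with all coordinates of x_0 in S_i, and q_i = (x_0)_i for some index i, then π_{σ(i)}(g(q)) = π_{σ(i)}(g(x_0)) = g_i((x_0)_i). -/

import Mathlib

/-- The co-normal product of a family of simple graphs. -/
def conormalProd {n : ℕ} {V : Fin n → Type*} (B : ∀ i, SimpleGraph (V i)) :
    SimpleGraph (∀ i, V i) where
  Adj u v := ∃ i, (B i).Adj (u i) (v i)
  symm := ⟨by rintro u v ⟨i, h⟩; exact ⟨i, h.symm⟩⟩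
  loopless := ⟨by rintro u ⟨i, h⟩; exact h.ne rfl⟩

/-- let `g` be an injective homomorphism of the co-normal product of
graphs of maximal degree at most 1, with componentwise factors `gᵢ` on the vertices
all of whose coordinates have a neighbor. If `x₀` has all coordinates with a neighbor
and `q` agrees with `x₀` in the `i`-th coordinate, then
`π_{σ i} (g q) = π_{σ i} (g x₀) = gᵢ ((x₀)ᵢ)`. -/
theorem stmt14 (n : ℕ) (V : Fin n → Type*) (B : ∀ i, SimpleGraph (V i))
    (hdeg : ∀ i, ∀ a b c : V i, (B i).Adj a b → (B i).Adj a c → b = c)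
    (g : (∀ i, V i) → ∀ i, V i)
    (hhom : ∀ u v, (conormalProd B).Adj u v → (conormalProd B).Adj (g u) (g v))
    (hinj : Function.Injective g)
    (σ : Equiv.Perm (Fin n))
    (g' : ∀ i, {v : V i // ∃ w, (B i).Adj v w} → {v : V (σ i) // ∃ w, (B (σ i)).Adj v w})
    (hfact : ∀ (x : ∀ i, V i), (∀ j, ∃ w, (B j).Adj (x j) w) →
      ∀ (i : Fin n) (h : ∃ w, (B i).Adj (x i) w), g x (σ i) = (g' i ⟨x i, h⟩).1)
    (q x₀ : ∀ i, V i)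
    (hx₀ : ∀ j, ∃ w, (B j).Adj (x₀ j) w)
    (i : Fin n) (hqi : q i = x₀ i) :
    g q (σ i) = g x₀ (σ i) ∧ g x₀ (σ i) = (g' i ⟨x₀ i, hx₀ i⟩).1 := by
  classical
  set y : ∀ j, V j := fun j => (hx₀ j).choose with hy_def
  have hy : ∀ j, (B j).Adj (x₀ j) (y j) := fun j => (hx₀ j).choose_spec
  have hyS : ∀ j, ∃ w, (B j).Adj (y j) w := fun j => ⟨x₀ j, (hy j).symm⟩
  -- `g'` maps the edge `x₀ j ~ y j` to an edge
  have adj' : ∀ j, (B (σ j)).Adj (g' j ⟨x₀ j, hx₀ j⟩).1 (g' j ⟨y j, hyS j⟩).1 := by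
    intro j
    set u : ∀ m, V m := Function.update x₀ j (y j) with hu_def
    have hu : ∀ m, ∃ w, (B m).Adj (u m) w := by
      intro m
      by_cases hm : m = j
      · subst hm; simpa [hu_def] using hyS m
      · simpa [hu_def, Function.update_of_ne hm] using hx₀ m
    have hadj : (conormalProd B).Adj x₀ u := ⟨j, by simp [hu_def, hy j]⟩
    obtain ⟨k, hk⟩ := hhom _ _ hadj
    have hmk : σ (σ.symm k) = k := σ.apply_symm_apply k
    set m := σ.symm k with hmdef
    rw [← hmk] at hk
    rw [hfact x₀ hx₀ m (hx₀ m), hfact u hu m (hu m)] at hk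
    by_cases hmj : m = j
    · subst hmj
      have he : (⟨u m, hu m⟩ : {v : V m // ∃ w, (B m).Adj v w}) = ⟨y m, hyS m⟩ :=
        Subtype.ext (by simp [hu_def])
      rw [he] at hk
      exact hk
    · exfalso
      have he : (⟨u m, hu m⟩ : {v : V m // ∃ w, (B m).Adj v w}) = ⟨x₀ m, hx₀ m⟩ :=
        Subtype.ext (by simp [hu_def, Function.update_of_ne hmj])
      rw [he] at hk
      exact (B (σ m)).loopless.irrefl _ hk
  have hg0 : g x₀ (σ i) = (g' i ⟨x₀ i, hx₀ i⟩).1 := hfact x₀ hx₀ i (hx₀ i)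
  -- build a witness vertex adjacent to `q` only at coordinate `i` in the image
  set z : ∀ m, V m := fun m =>
    if (B (σ m)).Adj (g q (σ m)) (g' m ⟨x₀ m, hx₀ m⟩).1 then y m else x₀ m with hz_def
  set z' : ∀ m, V m := Function.update z i (y i) with hz'_def
  have hz' : ∀ m, ∃ w, (B m).Adj (z' m) w := by
    intro m
    by_cases hm : m = i
    · subst hm; simpa [hz'_def] using hyS m
    · rw [hz'_def, Function.update_of_ne hm, hz_def]
      by_cases hc : (B (σ m)).Adj (g q (σ m)) (g' m ⟨x₀ m, hx₀ m⟩).1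
      · simpa [hc] using hyS m
      · simpa [hc] using hx₀ m
  have hadj : (conormalProd B).Adj q z' := ⟨i, by simp [hz'_def, hqi, hy i]⟩
  obtain ⟨k, hk⟩ := hhom _ _ hadj
  have hmk : σ (σ.symm k) = k := σ.apply_symm_apply k
  set m := σ.symm k with hmdef
  rw [← hmk] at hk
  rw [hfact z' hz' m (hz' m)] at hk
  by_cases hmi : m = i
  · subst hmi
    have he : (⟨z' m, hz' m⟩ : {v : V m // ∃ w, (B m).Adj v w}) = ⟨y m, hyS m⟩ :=
      Subtype.ext (by simp [hz'_def])
    rw [he] at hk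
    have := hdeg (σ m) _ _ _ hk.symm (adj' m).symm
    exact ⟨this.trans hg0.symm, hg0⟩
  · exfalso
    have hzm : z' m = z m := Function.update_of_ne hmi _ _
    by_cases hc : (B (σ m)).Adj (g q (σ m)) (g' m ⟨x₀ m, hx₀ m⟩).1
    · have he : (⟨z' m, hz' m⟩ : {v : V m // ∃ w, (B m).Adj v w}) = ⟨y m, hyS m⟩ :=
        Subtype.ext (by simp [hz'_def, hz_def, Function.update_of_ne hmi, hc])
      rw [he] at hk
      have := hdeg (σ m) _ _ _ hc hk
      exact (B (σ m)).loopless.irrefl _ (this ▸ adj' m)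
    · have he : (⟨z' m, hz' m⟩ : {v : V m // ∃ w, (B m).Adj v w}) = ⟨x₀ m, hx₀ m⟩ :=
        Subtype.ext (by simp [hz'_def, hz_def, Function.update_of_ne hmi, hc])
      rw [he] at hk
      exact hc hk
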